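/- arXiv:1811.05897 — 4 statements merged into one kernel-verified Lean document; each statement's English description precedes it below -/
import Mathlib

section
/- Let h be a real number and let d > 0 satisfy d^3 = 2hd + 2 (equivalently 2h + 2/d - d^2 = 0). Then for all u with 0 < u < 1 we have 2h + 2/(du) - d^2 u^2 ≥ d^2(1 - u^2) > 0; consequently the integrand bound 1/sqrt(2h + 2/(du) - d^2 u^2) ≤ (1/d)·1/sqrt(1-u^2) holds pointwise. -/
/-!
Substituting the root relation `2h = d² - 2/d` turns the difference of the two sides of the first
inequality into `(2/d)(1/u - 1)`, which is nonnegative for `d > 0` and `0 < u ≤ 1`.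
The integrand bound then follows by taking square roots and reciprocals, since `√(d² c) = d √c`.
-/

lemma two_mul_eq_of_cube_eq {h d : ℝ} (hd : d ≠ 0) (hroot : d ^ 3 = 2 * h * d + 2) :
    2 * h = d ^ 2 - 2 / d := by
  field_simp
  linear_combination -hroot

lemma sub_sq_mul_one_sub_sq_eq {h d u : ℝ} (hd : d ≠ 0) (hu : u ≠ 0)
    (hroot : d ^ 3 = 2 * h * d + 2) :
    2 * h + 2 / (d * u) - d ^ 2 * u ^ 2 - d ^ 2 * (1 - u ^ 2) = 2 / d * (1 / u - 1) := by
  rw [two_mul_eq_of_cube_eq hd hroot]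
  field_simp
  ring

lemma sq_mul_one_sub_sq_le {h d u : ℝ} (hd : 0 < d) (hu : 0 < u) (hu1 : u ≤ 1)
    (hroot : d ^ 3 = 2 * h * d + 2) :
    d ^ 2 * (1 - u ^ 2) ≤ 2 * h + 2 / (d * u) - d ^ 2 * u ^ 2 := by
  have hexcess := sub_sq_mul_one_sub_sq_eq hd.ne' hu.ne' hroot
  have hinv : 0 ≤ 1 / u - 1 := sub_nonneg.2 (one_le_one_div hu hu1)
  linarith [mul_nonneg (div_pos two_pos hd).le hinv]

lemma one_div_sqrt_le_of_sq_mul_le {d c x : ℝ} (hd : 0 < d) (hc : 0 < c) (hx : d ^ 2 * c ≤ x) :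
    1 / √x ≤ 1 / d * (1 / √c) := calc
  1 / √x ≤ 1 / √(d ^ 2 * c) :=
    one_div_le_one_div_of_le (Real.sqrt_pos.2 (by positivity)) (Real.sqrt_le_sqrt hx)
  _ = 1 / d * (1 / √c) := by
    rw [Real.sqrt_mul (sq_nonneg d), Real.sqrt_sq hd.le, one_div_mul_one_div]

/-- Pointwise integrand bound for the period integral in Hill's lunar problem. -/
theorem integrand_bound (h d : ℝ) (hd : 0 < d) (hroot : d ^ 3 = 2 * h * d + 2) :
    ∀ u : ℝ, 0 < u → u < 1 →
      (2 * h + 2 / (d * u) - d ^ 2 * u ^ 2 ≥ d ^ 2 * (1 - u ^ 2)) ∧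
      (0 < d ^ 2 * (1 - u ^ 2)) ∧
      1 / Real.sqrt (2 * h + 2 / (d * u) - d ^ 2 * u ^ 2) ≤
        (1 / d) * (1 / Real.sqrt (1 - u ^ 2)) := by
  intro u hu hu1
  have hlower := sq_mul_one_sub_sq_le hd hu hu1.le hroot
  have hone_sub : 0 < 1 - u ^ 2 := by nlinarith
  exact ⟨hlower, by positivity, one_div_sqrt_le_of_sq_mul_le hd hone_sub hlower⟩
end

section
/- For every real h, the period T* = 2∫₀^{d(h)} dz / sqrt(2h + 2/z - z^2) of the polar consecutive-collision orbit in Hill's lunar problem satisfies T* ≤ π, where d(h) is the unique positive root of z^3 - 2hz - 2 = 0. -/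
/-!
Since `d` is a root of the cubic, `2h = d² - 2/d`, so for `0 < z < d` the radicand satisfies
`2h + 2/z - z² ≥ d² - z²`. The integrand is therefore dominated by `1 / √(d² - z²)`, whose
integral over `[0, d]` is `arcsin 1 - arcsin 0 = π/2`.
-/

open intervalIntegral Real Set MeasureTheory

lemma hasDerivAt_arcsin_div {d z : ℝ} (hd : 0 < d) (hz : |z| < d) :
    HasDerivAt (fun t => arcsin (t / d)) (1 / √(d ^ 2 - z ^ 2)) z := by
  have hzd : |z / d| < 1 := by rwa [abs_div, abs_of_pos hd, div_lt_one hd]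
  obtain ⟨hlo, hhi⟩ := abs_lt.mp hzd
  refine ((hasDerivAt_arcsin hlo.ne' hhi.ne).comp z ((hasDerivAt_id z).div_const d)).congr_deriv ?_
  have hsqrt : √(d ^ 2 - z ^ 2) = d * √(1 - (z / d) ^ 2) := by
    rw [show d ^ 2 - z ^ 2 = d ^ 2 * (1 - (z / d) ^ 2) by field_simp,
      sqrt_mul (sq_nonneg d), sqrt_sq hd.le]
  rw [hsqrt, one_div_mul_one_div, mul_comm]

lemma abs_lt_of_mem_Ioo_of_mem_Icc {a b d x : ℝ} (ha : a ∈ Icc (-d) d) (hb : b ∈ Icc (-d) d)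
    (hx : x ∈ Ioo (min a b) (max a b)) : |x| < d := by
  rw [abs_lt]
  constructor
  · exact (le_min ha.1 hb.1).trans_lt hx.1
  · exact hx.2.trans_le (max_le ha.2 hb.2)

lemma intervalIntegrable_one_div_sqrt_sq_sub_sq {a b d : ℝ} (hd : 0 < d)
    (ha : a ∈ Icc (-d) d) (hb : b ∈ Icc (-d) d) :
    IntervalIntegrable (fun z => 1 / √(d ^ 2 - z ^ 2)) volume a b :=
  intervalIntegrable_deriv_of_nonneg (by fun_prop)
    (fun _ hx => hasDerivAt_arcsin_div hd (abs_lt_of_mem_Ioo_of_mem_Icc ha hb hx))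
    (fun _ _ => by positivity)

lemma integral_one_div_sqrt_sq_sub_sq {a b d : ℝ} (hd : 0 < d)
    (ha : a ∈ Icc (-d) d) (hb : b ∈ Icc (-d) d) :
    ∫ z in a..b, 1 / √(d ^ 2 - z ^ 2) = arcsin (b / d) - arcsin (a / d) :=
  integral_eq_sub_of_hasDeriv_right (by fun_prop)
    (fun _ hx => (hasDerivAt_arcsin_div hd (abs_lt_of_mem_Ioo_of_mem_Icc ha hb hx)).hasDerivWithinAt)
    (intervalIntegrable_one_div_sqrt_sq_sub_sq hd ha hb)

lemma one_div_sqrt_le_one_div_sqrt_sq_sub_sq {h d z : ℝ} (hroot : d ^ 3 - 2 * h * d - 2 = 0)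
    (hz : z ∈ Ioo 0 d) :
    1 / √(2 * h + 2 / z - z ^ 2) ≤ 1 / √(d ^ 2 - z ^ 2) := by
  obtain ⟨hz0, hzd⟩ := hz
  have hd : 0 < d := hz0.trans hzd
  have h2h : 2 * h = d ^ 2 - 2 / d := by
    field_simp
    linarith
  have hinv : 2 / d ≤ 2 / z := div_le_div_of_nonneg_left zero_le_two hz0 hzd.le
  have hpos : 0 < d ^ 2 - z ^ 2 := by nlinarith
  gcongr
  linarith

/-- The period of the polar consecutive-collision orbit in Hill's lunar problem
is bounded by `π`: if `d` is the unique positive root of `z^3 - 2hz - 2 = 0`, then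
`T* = 2 ∫₀^d dz / √(2h + 2/z - z²) ≤ π`. -/
theorem period_bound (h d : ℝ) (hd : 0 < d) (hroot : d ^ 3 - 2 * h * d - 2 = 0) :
    2 * (∫ z in (0:ℝ)..d, 1 / Real.sqrt (2 * h + 2 / z - z ^ 2)) ≤ Real.pi := by
  have h0 : (0 : ℝ) ∈ Icc (-d) d := ⟨by linarith, hd.le⟩
  have hd' : d ∈ Icc (-d) d := ⟨by linarith, le_rfl⟩
  by_cases hint : IntervalIntegrable (fun z => 1 / √(2 * h + 2 / z - z ^ 2)) volume 0 d
  · have hle := integral_mono_on_of_le_Ioo hd.le hint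
      (intervalIntegrable_one_div_sqrt_sq_sub_sq hd h0 hd')
      (fun z hz => one_div_sqrt_le_one_div_sqrt_sq_sub_sq hroot hz)
    rw [integral_one_div_sqrt_sq_sub_sq hd h0 hd', div_self hd.ne', zero_div, arcsin_one,
      arcsin_zero] at hle
    linarith
  · -- a non-integrable integrand has interval integral `0` by convention
    rw [integral_undef hint]
    linarith [pi_pos]
end

section
/- In the Jordan algebra 𝔸_2, the associator a(x,y,z) = x(yz) - (xy)z satisfies the closed formula a(x,y,z) = (x_2 z_1 - x_1 z_2)(i_1 y_2 - i_2 y_1), for all x, y, z ∈ 𝔸_2 written as x = x_0 + i_1 x_1 + i_2 x_2, etc. -/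
open scoped BigOperators

/-- The product of the Jordan algebra `𝔸ₙ = ℝ^{n+1}`, represented as
`ℝ × (Fin n → ℝ)`: the bilinear commutative product with `1` as identity and
`i_α i_β = -δ_{αβ}`. -/
def jmul {n : ℕ} (z w : ℝ × (Fin n → ℝ)) : ℝ × (Fin n → ℝ) :=
  (z.1 * w.1 - ∑ i, z.2 i * w.2 i, fun i => z.1 * w.2 i + w.1 * z.2 i)

/-!
Writing `x = (a, u)`, `y = (b, v)`, `z = (c, w)`, every term of `x(yz) - (xy)z` involving a
scalar part cancels, and what survives is the vector `(u ⬝ v) w - (v ⬝ w) u`, in any dimension.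
In the plane this vector is `det(u, w)` times `v` rotated by a quarter turn.
-/

open Matrix

lemma jmul_eq {n : ℕ} (z w : ℝ × (Fin n → ℝ)) :
    jmul z w = (z.1 * w.1 - z.2 ⬝ᵥ w.2, z.1 • w.2 + w.1 • z.2) :=
  rfl

theorem jmul_associator {n : ℕ} (x y z : ℝ × (Fin n → ℝ)) :
    jmul x (jmul y z) - jmul (jmul x y) z =
      (0, (x.2 ⬝ᵥ y.2) • z.2 - (y.2 ⬝ᵥ z.2) • x.2) := by
  simp only [jmul_eq, Prod.mk_sub_mk, dotProduct_add, add_dotProduct, dotProduct_smul,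
    smul_dotProduct, smul_eq_mul, dotProduct_comm x.2 z.2]
  congr 1
  · ring
  · module

theorem dotProduct_smul_sub_dotProduct_smul_fin_two {R : Type*} [CommRing R] (u v w : Fin 2 → R) :
    (u ⬝ᵥ v) • w - (v ⬝ᵥ w) • u = (u 1 * w 0 - u 0 * w 1) • ![v 1, -v 0] := by
  ext i
  fin_cases i <;>
    simp only [dotProduct, Fin.sum_univ_two, Fin.zero_eta, Fin.mk_one, Pi.sub_apply, Pi.smul_apply,
      smul_eq_mul, cons_val_zero, cons_val_one, cons_val_fin_one] <;>
    ring

/-- In `𝔸₂`, the associator `a(x,y,z) = x(yz) - (xy)z` is given by the closed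
formula `a(x,y,z) = (x₂z₁ - x₁z₂)(i₁y₂ - i₂y₁)`.  Here `x = x₀ + i₁x₁ + i₂x₂`
is represented as `(x.1, x.2)` with `x.2 0 = x₁`, `x.2 1 = x₂`, etc. -/
theorem associator_formula (x y z : ℝ × (Fin 2 → ℝ)) :
    jmul x (jmul y z) - jmul (jmul x y) z =
      (x.2 1 * z.2 0 - x.2 0 * z.2 1) • ((0 : ℝ), ![y.2 1, -y.2 0]) := by
  rw [jmul_associator, dotProduct_smul_sub_dotProduct_smul_fin_two, Prod.smul_mk, smul_zero]
end

section
/- The Belbruno transform and its stated inverse are mutually inverse where defined: for p ∈ ℝⁿ with p ≠ -1 := (-1,0,...,0) and q ∈ ℝⁿ, applying the forward map (q,p) ↦ (Q,P) given by Q_1 = ((1-‖p‖²)/2)q_1 + ⟨q,p⟩(p_1+1), Q_j = ((‖p‖²+1)/2)q_j + p_1 q_j - p_j q_1 - ⟨q,p⟩p_j (j ≥ 2), P_1 = (‖p‖²-1)/‖p+1‖², P_j = 2p_j/‖p+1‖², followed by the stated inverse map, recovers (q,p). -/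
open scoped BigOperators

namespace Belbruno

/-- Squared Euclidean norm on `ℝ³`. -/
def norm2 (v : Fin 3 → ℝ) : ℝ := ∑ i, v i ^ 2

/-- Euclidean inner product on `ℝ³`. -/
def dot (u v : Fin 3 → ℝ) : ℝ := ∑ i, u i * v i

/-- Position part of the forward Belbruno transform. -/
noncomputable def fwdQ (q p : Fin 3 → ℝ) : Fin 3 → ℝ :=
  ![((1 - norm2 p) / 2) * q 0 + dot q p * (p 0 + 1),
    ((norm2 p + 1) / 2) * q 1 + p 0 * q 1 - p 1 * q 0 - dot q p * p 1,
    ((norm2 p + 1) / 2) * q 2 + p 0 * q 2 - p 2 * q 0 - dot q p * p 2]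

/-- Momentum part of the forward Belbruno transform, a Möbius map sending `-1` to `∞`. -/
noncomputable def fwdP (p : Fin 3 → ℝ) : Fin 3 → ℝ :=
  ![(norm2 p - 1) / ((p 0 + 1) ^ 2 + p 1 ^ 2 + p 2 ^ 2),
    2 * p 1 / ((p 0 + 1) ^ 2 + p 1 ^ 2 + p 2 ^ 2),
    2 * p 2 / ((p 0 + 1) ^ 2 + p 1 ^ 2 + p 2 ^ 2)]

/-- Position part of the inverse Belbruno transform. -/
noncomputable def invq (Q P : Fin 3 → ℝ) : Fin 3 → ℝ :=
  ![((1 - norm2 P) / 2) * Q 0 + dot Q P * (P 0 - 1),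
    ((norm2 P + 1) / 2) * Q 1 - P 0 * Q 1 + P 1 * Q 0 - dot Q P * P 1,
    ((norm2 P + 1) / 2) * Q 2 - P 0 * Q 2 + P 2 * Q 0 - dot Q P * P 2]

/-- Momentum part of the inverse Belbruno transform, defined for `P ≠ 1`. -/
noncomputable def invp (P : Fin 3 → ℝ) : Fin 3 → ℝ :=
  ![(1 - norm2 P) / ((P 0 - 1) ^ 2 + P 1 ^ 2 + P 2 ^ 2),
    2 * P 1 / ((P 0 - 1) ^ 2 + P 1 ^ 2 + P 2 ^ 2),
    2 * P 2 / ((P 0 - 1) ^ 2 + P 1 ^ 2 + P 2 ^ 2)]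


/-!
With `D = ‖p + 1‖²`, the momentum map `P = fwdP p` satisfies `‖P‖² = ‖p - 1‖² / D` and
`‖P - 1‖² = 4 / D`, from which `invp P = p` is immediate. On the position side, the identity
`⟨Q, P⟩ = p 0 * ⟨q, p⟩ - (‖p‖² + 1) * q 0 / 2` reduces `invq Q P = q` to a rational identity
in the coordinates of `p` and `q`.
-/

lemma norm2_apply (v : Fin 3 → ℝ) : norm2 v = v 0 ^ 2 + v 1 ^ 2 + v 2 ^ 2 := by
  simp [norm2, Fin.sum_univ_three]

lemma dot_apply (u v : Fin 3 → ℝ) : dot u v = u 0 * v 0 + u 1 * v 1 + u 2 * v 2 := by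
  simp [dot, Fin.sum_univ_three]

lemma sq_add_one_add_sq_add_sq_ne_zero {p : Fin 3 → ℝ} (hp : p ≠ ![(-1 : ℝ), 0, 0]) :
    (p 0 + 1) ^ 2 + p 1 ^ 2 + p 2 ^ 2 ≠ 0 := by
  contrapose! hp
  have h0 : p 0 + 1 = 0 := by nlinarith [sq_nonneg (p 0 + 1), sq_nonneg (p 1), sq_nonneg (p 2)]
  have h1 : p 1 = 0 := by nlinarith [sq_nonneg (p 0 + 1), sq_nonneg (p 1), sq_nonneg (p 2)]
  have h2 : p 2 = 0 := by nlinarith [sq_nonneg (p 0 + 1), sq_nonneg (p 1), sq_nonneg (p 2)]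
  ext i
  fin_cases i <;> simp [eq_neg_of_add_eq_zero_left h0, h1, h2]

section

variable {p : Fin 3 → ℝ} (hD : (p 0 + 1) ^ 2 + p 1 ^ 2 + p 2 ^ 2 ≠ 0)
include hD

lemma norm2_fwdP :
    norm2 (fwdP p) = ((p 0 - 1) ^ 2 + p 1 ^ 2 + p 2 ^ 2) / ((p 0 + 1) ^ 2 + p 1 ^ 2 + p 2 ^ 2) := by
  simp only [fwdP, norm2_apply, Matrix.cons_val_zero, Matrix.cons_val_one, Matrix.cons_val]
  field_simp
  ring

lemma sub_one_sq_add_sq_add_sq_fwdP :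
    (fwdP p 0 - 1) ^ 2 + fwdP p 1 ^ 2 + fwdP p 2 ^ 2 = 4 / ((p 0 + 1) ^ 2 + p 1 ^ 2 + p 2 ^ 2) := by
  simp only [fwdP, norm2_apply, Matrix.cons_val_zero, Matrix.cons_val_one, Matrix.cons_val]
  field_simp
  ring

lemma dot_fwdQ_fwdP (q : Fin 3 → ℝ) :
    dot (fwdQ q p) (fwdP p) = p 0 * dot q p - (norm2 p + 1) / 2 * q 0 := by
  simp only [fwdQ, fwdP, dot_apply, norm2_apply, Matrix.cons_val_zero, Matrix.cons_val_one,
    Matrix.cons_val]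
  field_simp
  ring

theorem invp_fwdP : invp (fwdP p) = p := by
  rw [invp, sub_one_sq_add_sq_add_sq_fwdP hD, norm2_fwdP hD]
  ext i
  fin_cases i <;>
    simp only [fwdP, norm2_apply, Matrix.cons_val_zero, Matrix.cons_val_one, Matrix.cons_val,
      Fin.zero_eta, Fin.mk_one, Fin.reduceFinMk] <;>
    field_simp <;> ring

theorem invq_fwdQ_fwdP (q : Fin 3 → ℝ) : invq (fwdQ q p) (fwdP p) = q := by
  rw [invq, dot_fwdQ_fwdP hD, norm2_fwdP hD]
  ext i
  fin_cases i <;>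
    simp only [fwdQ, fwdP, dot_apply, norm2_apply, Matrix.cons_val_zero, Matrix.cons_val_one,
      Matrix.cons_val, Fin.zero_eta, Fin.mk_one, Fin.reduceFinMk] <;>
    field_simp <;> ring

end

/-- The Belbruno transform and its stated inverse are mutually inverse where
defined: for `p ≠ (-1,0,0)`, applying the forward map `(q,p) ↦ (Q,P)` followed
by the inverse map recovers `(q,p)`. -/
theorem inverse_of_forward (q p : Fin 3 → ℝ) (hp : p ≠ ![(-1 : ℝ), 0, 0]) :
    invq (fwdQ q p) (fwdP p) = q ∧ invp (fwdP p) = p := by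
  have hD := sq_add_one_add_sq_add_sq_ne_zero hp
  exact ⟨invq_fwdQ_fwdP hD q, invp_fwdP hD⟩

end Belbruno
end
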